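/- Let θ > 0 and α > −1 be real numbers and N ≥ 1 an integer. Define the N×N matrix G = (g_{ij})_{i,j=1}^N by g_{ij} = 1/(j+θ(i−1)+α), which is the Gram matrix ∫_0^1 x^{j−1}·x^{θ(i−1)}·x^α dx of the monomial systems x^{j−1} and x^{θ(i−1)} with respect to the weight x^α on (0,1). Then G is invertible and its inverse is the matrix C = (c_{kl})_{k,l=1}^N with entries c_{kl} = θ · [((k+α)/θ)_N / ((k−1)!(N−k)!)] · [(θ(l−1)+α+1)_N / ((l−1)!(N−l)!)] · (−1)^{k+l}/(k+θ(l−1)+α); equivalently, Σ_{l=1}^N c_{kl} · 1/(j+θ(l−1)+α) = δ_{kj} for all k,j. -/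

import Mathlib

open Finset Polynomial Lagrange
open scoped Nat

/-!
`G` is the Cauchy matrix `(z j - x i)⁻¹` with nodes `x i = -θ i` and `z j = j + 1 + α`.
Interpolating `∏_{m ≠ k} (X - z m)`, of degree `N - 1`, at the nodes `x` and evaluating the
barycentric form at `z j` gives the classical inverse of a Cauchy matrix, whose entries are
products of nodal weights and values of nodal polynomials. For nodes in arithmetic progression
the nodal weights are reciprocals of signed products of factorials and the nodal polynomials
evaluate to Pochhammer symbols, which gives the stated entries.
-/

theorem ascPochhammer_eval_eq_prod_range {R : Type*} [CommSemiring R] (n : ℕ) (r : R) :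
    (ascPochhammer R n).eval r = ∏ j ∈ range n, (r + j) := by
  induction n with
  | zero => simp
  | succ n ih => rw [ascPochhammer_succ_eval, ih, prod_range_succ]

theorem Fin.prod_add_mul_eq_pow_mul_ascPochhammer {F : Type*} [Field F] (N : ℕ) (a c : F)
    (hc : c ≠ 0) : ∏ m : Fin N, (a + c * m) = c ^ N * (ascPochhammer F N).eval (a / c) := by
  rw [ascPochhammer_eval_eq_prod_range, ← Fin.prod_univ_eq_prod_range, ← Fintype.card_fin N,
    ← prod_const, ← prod_mul_distrib, Fintype.card_fin]
  refine prod_congr rfl fun m _ => ?_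
  field_simp

theorem prod_range_erase_sub (R : Type*) [CommRing R] (l n : ℕ) :
    ∏ m ∈ (range (l + 1 + n)).erase l, ((m : R) - l) = (-1) ^ l * l ! * n ! := by
  induction n with
  | zero =>
    rw [add_zero, range_add_one, erase_insert notMem_range_self, Nat.factorial_zero,
      Nat.cast_one, mul_one]
    have h : ∀ m ∈ range l, (m : R) - l = -1 * ((l : R) - m) := fun m _ => by ring
    rw [prod_congr rfl h, prod_mul_distrib, prod_const, card_range,
      ← descPochhammer_eval_eq_prod_range, descPochhammer_eval_eq_descFactorial,
      Nat.descFactorial_self]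
  | succ n ih =>
    rw [← add_assoc, range_add_one, erase_insert_of_ne (by omega),
      prod_insert (by simp), ih, Nat.factorial_succ]
    push_cast
    ring

theorem Fin.prod_univ_erase_sub (R : Type*) [CommRing R] {N : ℕ} (l : Fin N) :
    ∏ m ∈ univ.erase l, ((m : R) - l) = (-1) ^ (l : ℕ) * (l : ℕ)! * (N - 1 - l)! := by
  rw [← prod_range_erase_sub, show (l : ℕ) + 1 + (N - 1 - l) = N by omega, ← image_fin_univ,
    ← image_erase Fin.val_injective, prod_image Fin.val_injective.injOn]

theorem nodalWeight_univ_affine {F : Type*} [Field F] {N : ℕ} {v : Fin N → F} (c b : F)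
    (hv : ∀ i, v i = c * i + b) (l : Fin N) :
    nodalWeight univ v l =
      ((-c) ^ (N - 1) * ((-1) ^ (l : ℕ) * (l : ℕ)! * (N - 1 - l)!))⁻¹ := by
  have h : ∀ m ∈ univ.erase l, v l - v m = -c * ((m : F) - l) := fun m _ => by
    rw [hv, hv]; ring
  rw [nodalWeight, prod_inv_distrib, prod_congr rfl h, prod_mul_distrib, prod_const,
    card_erase_of_mem (mem_univ l), card_univ, Fintype.card_fin, Fin.prod_univ_erase_sub]

theorem eval_nodal_univ_affine {F : Type*} [Field F] {N : ℕ} {v : Fin N → F} {c : F} (b t : F)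
    (hc : c ≠ 0) (hv : ∀ i, v i = c * i + b) :
    (nodal univ v).eval t = (-c) ^ N * (ascPochhammer F N).eval ((b - t) / c) := by
  have h : ∀ m : Fin N, t - v m = (t - b) + -c * m := fun m => by rw [hv]; ring
  rw [eval_nodal, Fintype.prod_congr _ _ h,
    Fin.prod_add_mul_eq_pow_mul_ascPochhammer _ _ _ (neg_ne_zero.mpr hc), div_neg, ← neg_div,
    neg_sub]

section Cauchy

variable {F : Type*} [Field F] {ι : Type*} [Fintype ι] [DecidableEq ι] {x z : ι → F}

theorem sum_nodalWeight_mul_eval_div_sub (hx : Function.Injective x) {p : F[X]}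
    (hp : p.degree < Fintype.card ι) {t : F} (ht : ∀ l, t ≠ x l) :
    ∑ l, nodalWeight univ x l * p.eval (x l) / (t - x l) = p.eval t / (nodal univ x).eval t := by
  have hnodal : (nodal univ x).eval t ≠ 0 := eval_nodal_not_at_node fun l _ => ht l
  conv_rhs => rw [eq_interpolate hx.injOn hp, eval_interpolate_not_at_node _ fun l _ => ht l]
  rw [mul_div_cancel_left₀ _ hnodal]
  exact sum_congr rfl fun l _ => by ring

theorem cauchy_inverse_mul_eq_one (hx : Function.Injective x) (hz : Function.Injective z)
    (hxz : ∀ l j, x l ≠ z j) :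
    (Matrix.of fun k l => nodalWeight univ z k * (nodal univ x).eval (z k) *
        nodalWeight univ x l * (nodal univ z).eval (x l) / (x l - z k)) *
      Matrix.of (fun l j => (z j - x l)⁻¹) = 1 := by
  ext k j
  have hk : k ∈ univ := mem_univ k
  set f : F[X] := nodal (univ.erase k) z
  have hf : f.degree < Fintype.card ι := by
    rw [degree_nodal, card_erase_of_mem hk, card_univ]
    exact_mod_cast Nat.sub_lt (Fintype.card_pos_iff.mpr ⟨k⟩) one_pos
  have hfx : ∀ l, (nodal univ z).eval (x l) / (x l - z k) = f.eval (x l) := fun l => by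
    rw [nodal_eq_mul_nodal_erase hk, eval_mul, eval_sub, eval_X, eval_C,
      mul_div_cancel_left₀ _ (sub_ne_zero.mpr (hxz l k))]
  have hsum := sum_nodalWeight_mul_eval_div_sub hx hf fun l => (hxz l j).symm
  simp only [Matrix.mul_apply, Matrix.of_apply, Matrix.one_apply]
  calc ∑ l, nodalWeight univ z k * (nodal univ x).eval (z k) * nodalWeight univ x l *
          (nodal univ z).eval (x l) / (x l - z k) * (z j - x l)⁻¹
      = nodalWeight univ z k * (nodal univ x).eval (z k) *
          ∑ l, nodalWeight univ x l * f.eval (x l) / (z j - x l) := by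
        rw [mul_sum]
        exact sum_congr rfl fun l _ => by rw [← hfx]; ring
    _ = if k = j then 1 else 0 := by
        rw [hsum]
        split_ifs with hkj
        · subst hkj
          have hw : nodalWeight univ z k = (f.eval (z k))⁻¹ :=
            nodalWeight_eq_eval_nodal_erase_inv
          have hf0 : f.eval (z k) ≠ 0 := fun h0 =>
            nodalWeight_ne_zero hz.injOn hk (by rw [hw, h0, inv_zero])
          have hn : (nodal univ x).eval (z k) ≠ 0 :=
            eval_nodal_not_at_node fun l _ => (hxz l k).symm
          rw [hw]
          field_simp
        · rw [eval_nodal_at_node (mem_erase.mpr ⟨Ne.symm hkj, mem_univ j⟩)]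
          simp

end Cauchy

theorem jacobi_cauchy_inverse_entry {θ α : ℝ} (hθ : θ ≠ 0) {N : ℕ} {x z : Fin N → ℝ}
    (hx : ∀ i, x i = -θ * i) (hz : ∀ j, z j = j + 1 + α) (k l : Fin N) (hkl : x l ≠ z k) :
    nodalWeight univ z k * (nodal univ x).eval (z k) * nodalWeight univ x l *
        (nodal univ z).eval (x l) / (x l - z k) =
      θ * ((ascPochhammer ℝ N).eval (((k : ℝ) + 1 + α) / θ) / ((k : ℕ)! * (N - 1 - k)!)) *
        ((ascPochhammer ℝ N).eval (θ * l + α + 1) / ((l : ℕ)! * (N - 1 - l)!)) *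
        ((-1) ^ ((k : ℕ) + l) / ((k : ℝ) + 1 + θ * l + α)) := by
  have hx' : ∀ i, x i = -θ * i + 0 := fun i => by rw [hx, add_zero]
  have hz' : ∀ j, z j = 1 * j + (1 + α) := fun j => by rw [hz]; ring
  rw [nodalWeight_univ_affine _ _ hx', nodalWeight_univ_affine _ _ hz',
    eval_nodal_univ_affine _ _ (neg_ne_zero.mpr hθ) hx',
    eval_nodal_univ_affine _ _ one_ne_zero hz']
  have hP : (0 - z k) / -θ = ((k : ℝ) + 1 + α) / θ := by rw [hz]; ring
  have hQ : (1 + α - x l) / 1 = θ * l + α + 1 := by rw [hx]; ring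
  have hu : x l - z k = -((k : ℝ) + 1 + θ * l + α) := by rw [hx, hz]; ring
  have hu0 : (k : ℝ) + 1 + θ * l + α ≠ 0 := by
    rw [← neg_ne_zero, ← hu]; exact sub_ne_zero.mpr hkl
  obtain ⟨n, rfl⟩ : ∃ n, N = n + 1 := ⟨N - 1, by have := k.pos; omega⟩
  rw [hP, hQ, hu, neg_neg, Nat.add_sub_cancel]
  field_simp
  have hsq : ∀ m : ℕ, (-1 : ℝ) ^ m * (-1) ^ m = 1 := fun m => by rw [← mul_pow]; norm_num
  set P := (ascPochhammer ℝ (n + 1)).eval (((k : ℝ) + 1 + α) / θ)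
  set Q := (ascPochhammer ℝ (n + 1)).eval (θ * l + α + 1)
  set T := θ ^ (n + 1) * P * Q * (-1) ^ n
  linear_combination (-(T * (-1) ^ (l : ℕ) * (-1) ^ (l : ℕ))) * hsq k - T * hsq l

theorem jacobi_gram_inverse (θ α : ℝ) (hθ : 0 < θ) (hα : -1 < α)
    (N : ℕ) :
    let G : Matrix (Fin N) (Fin N) ℝ :=
      Matrix.of fun i j => 1 / ((j : ℝ) + 1 + θ * (i : ℝ) + α)
    let C : Matrix (Fin N) (Fin N) ℝ :=
      Matrix.of fun k l =>
        θ * ((ascPochhammer ℝ N).eval (((k : ℝ) + 1 + α) / θ) /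
              ((Nat.factorial k : ℝ) * (Nat.factorial (N - 1 - (k : ℕ)) : ℝ))) *
          ((ascPochhammer ℝ N).eval (θ * (l : ℝ) + α + 1) /
              ((Nat.factorial l : ℝ) * (Nat.factorial (N - 1 - (l : ℕ)) : ℝ))) *
          ((-1) ^ ((k : ℕ) + (l : ℕ)) / ((k : ℝ) + 1 + θ * (l : ℝ) + α))
    C * G = 1 ∧ G * C = 1 := by
  intro G C
  let x : Fin N → ℝ := fun i => -θ * i
  let z : Fin N → ℝ := fun j => j + 1 + α
  have hx : x.Injective := fun a b h =>
    Fin.ext (by exact_mod_cast mul_left_cancel₀ (neg_ne_zero.mpr hθ.ne') h)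
  have hz : z.Injective := fun a b h =>
    Fin.ext (by exact_mod_cast add_right_cancel (add_right_cancel h))
  have hxz : ∀ l j, x l ≠ z j := fun l j h => by
    have : 0 ≤ θ * l := by positivity
    have : (0 : ℝ) ≤ j := by positivity
    simp only [x, z] at h
    linarith
  have hG : G = Matrix.of fun l j => (z j - x l)⁻¹ := by
    ext l j
    simp only [G, x, z, Matrix.of_apply, one_div]
    ring_nf
  have hC : C = Matrix.of fun k l => nodalWeight univ z k * (nodal univ x).eval (z k) *
      nodalWeight univ x l * (nodal univ z).eval (x l) / (x l - z k) := by
    ext k l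
    exact (jacobi_cauchy_inverse_entry hθ.ne' (fun _ => rfl) (fun _ => rfl) k l (hxz l k)).symm
  have hCG : C * G = 1 := by rw [hC, hG]; exact cauchy_inverse_mul_eq_one hx hz hxz
  exact ⟨hCG, mul_eq_one_comm.mp hCG⟩
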